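/- In the polynomial ring ℂ[λ,x,y,z] one has the identity λ²·S₁ + (λ³+3λ²−4)·S₂ = (λ(x³+y³+z³) − (λ³+2)xyz)², where S₁ = x⁶+y⁶+z⁶+(λ³+3λ²−2)(x³y³+y³z³+x³z³)+(−3λ²−3λ)(x⁴yz+xy⁴z+xyz⁴)+(−3λ³+9λ+3)x²y²z² and S₂ = −λ²(x³y³+y³z³+x³z³)+λ(x⁴yz+xy⁴z+xyz⁴)+(λ³−1)x²y²z². (Note λ³+3λ²−4 = (λ−1)(λ+2)². This exhibits the double sextic (λ(x³+y³+z³)−(λ³+2)xyz)² as a member of the pencil spanned by S₁ and S₂; hence the four sextics S₁, S₂ and S₁+3(1−ω²)S₂, S₁+3(1−ω)S₂ are members of the Halphen pencil of index 2 spanned by S₁ and the square (λ(x³+y³+z³)−(λ³+2)xyz)².) -/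

import Mathlib

open MvPolynomial

/-- The sextic form `S₁` in `ℂ[λ,x,y,z] = MvPolynomial (Fin 4) ℂ`, with `X 0 = λ`, `X 1 = x`,
`X 2 = y`, `X 3 = z`. For each fixed `λ` it equals `s₁(λ) = f₁(λ)f₂(λ)f₁₂(λ)`. -/
noncomputable def hesseS₁ : MvPolynomial (Fin 4) ℂ :=
  X 1 ^ 6 + X 2 ^ 6 + X 3 ^ 6
    + (X 0 ^ 3 + 3 * X 0 ^ 2 - 2) *
        (X 1 ^ 3 * X 2 ^ 3 + X 2 ^ 3 * X 3 ^ 3 + X 1 ^ 3 * X 3 ^ 3)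
    + (-3 * X 0 ^ 2 - 3 * X 0) *
        (X 1 ^ 4 * X 2 * X 3 + X 1 * X 2 ^ 4 * X 3 + X 1 * X 2 * X 3 ^ 4)
    + (-3 * X 0 ^ 3 + 9 * X 0 + 3) * (X 1 ^ 2 * X 2 ^ 2 * X 3 ^ 2)

/-- For each fixed `λ` this equals `s₂(λ) = f₃(λ)f₇(λ)f₁₁(λ)`. -/
noncomputable def hesseS₂ : MvPolynomial (Fin 4) ℂ :=
  - X 0 ^ 2 * (X 1 ^ 3 * X 2 ^ 3 + X 2 ^ 3 * X 3 ^ 3 + X 1 ^ 3 * X 3 ^ 3)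
    + X 0 * (X 1 ^ 4 * X 2 * X 3 + X 1 * X 2 ^ 4 * X 3 + X 1 * X 2 * X 3 ^ 4)
    + (X 0 ^ 3 - 1) * (X 1 ^ 2 * X 2 ^ 2 * X 3 ^ 2)

/-- In `ℂ[λ,x,y,z]` one has
`λ²·S₁ + (λ³+3λ²−4)·S₂ = (λ(x³+y³+z³) − (λ³+2)xyz)²`, and
`λ³+3λ²−4 = (λ−1)(λ+2)²`; this exhibits the double sextic as a member of the pencil
spanned by `S₁` and `S₂`, so that the pencil spanned by `S₁` and the square
`(λ(x³+y³+z³)−(λ³+2)xyz)²` is a Halphen pencil of index 2 containing `S₁`, `S₂`,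
`S₁+3(1−ω²)S₂` and `S₁+3(1−ω)S₂`. -/
theorem stmt_11 :
    X 0 ^ 2 * hesseS₁ + (X 0 ^ 3 + 3 * X 0 ^ 2 - 4) * hesseS₂ =
      (X 0 * (X 1 ^ 3 + X 2 ^ 3 + X 3 ^ 3) - (X 0 ^ 3 + 2) * (X 1 * X 2 * X 3)) ^ 2 ∧
    (X 0 ^ 3 + 3 * X 0 ^ 2 - 4 : MvPolynomial (Fin 4) ℂ) =
      (X 0 - 1) * (X 0 + 2) ^ 2 := by
  refine ⟨?_, by ring⟩
  rw [hesseS₁, hesseS₂]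
  ring
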